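/- arXiv:2408.07000 — 2 statements merged into one kernel-verified Lean document; each statement's English description precedes it below -/
import Mathlib

section
/- Given a Brauer datum (X, c, e, τ, δ) in a k-linear monoidal category C, the dotted bubbles ω_n := e ∘ (id_X ⊗ δ^n) ∘ c ∈ End(1) satisfy, for every r ∈ ℕ: ω_{2r+1} = (1/2)·(−ω_{2r} + Σ_{n=0}^{2r} (−1)^n · ω_n ∘ ω_{2r−n}). -/
open CategoryTheory CategoryTheory.MonoidalCategory

universe v u

/-- A Brauer datum in a `k`-linear monoidal category: an object `X` together with
cup, cap, crossing and dot morphisms satisfying the defining relations of the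
affine Brauer category (with unitors and associators written explicitly). -/
structure BrauerDatum (k : Type*) [CommRing k] [Invertible (2 : k)]
    (C : Type u) [Category.{v} C] [MonoidalCategory C]
    [Preadditive C] [Linear k C] [MonoidalPreadditive C] [MonoidalLinear k C] where
  X : C
  cup : 𝟙_ C ⟶ X ⊗ X
  cap : X ⊗ X ⟶ 𝟙_ C
  cross : X ⊗ X ⟶ X ⊗ X
  dot : X ⟶ X
  cross_cross : cross ≫ cross = 𝟙 (X ⊗ X)
  braid : (cross ▷ X) ≫ (α_ X X X).hom ≫ (X ◁ cross) ≫ (α_ X X X).inv ≫ (cross ▷ X) =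
    (α_ X X X).hom ≫ (X ◁ cross) ≫ (α_ X X X).inv ≫ (cross ▷ X) ≫
      (α_ X X X).hom ≫ (X ◁ cross) ≫ (α_ X X X).inv
  zig : (ρ_ X).inv ≫ (X ◁ cup) ≫ (α_ X X X).inv ≫ (cap ▷ X) ≫ (λ_ X).hom = 𝟙 X
  zag : (λ_ X).inv ≫ (cup ▷ X) ≫ (α_ X X X).hom ≫ (X ◁ cap) ≫ (ρ_ X).hom = 𝟙 X
  cross_cap : cross ≫ cap = cap
  cap_slide : (cross ▷ X) ≫ (α_ X X X).hom ≫ (X ◁ cap) ≫ (ρ_ X).hom =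
    (α_ X X X).hom ≫ (X ◁ cross) ≫ (α_ X X X).inv ≫ (cap ▷ X) ≫ (λ_ X).hom
  dot_cross : cross ≫ (dot ▷ X) - (X ◁ dot) ≫ cross = 𝟙 (X ⊗ X) - cap ≫ cup
  dot_cap : (dot ▷ X) ≫ cap = -((X ◁ dot) ≫ cap)

namespace BrauerDatum

variable {k : Type*} [CommRing k] [Invertible (2 : k)]
  {C : Type u} [Category.{v} C] [MonoidalCategory C]
  [Preadditive C] [Linear k C] [MonoidalPreadditive C] [MonoidalLinear k C]

variable (D : BrauerDatum k C)

/-- The `n`-fold composite of the dot. -/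
def dpow : ℕ → (D.X ⟶ D.X)
  | 0 => 𝟙 D.X
  | n + 1 => dpow n ≫ D.dot

/-- The `n`-dotted bubble `ω_n = e ∘ (id_X ⊗ δ^n) ∘ c` in `End(𝟙)`. -/
def bub (n : ℕ) : 𝟙_ C ⟶ 𝟙_ C := D.cup ≫ (D.X ◁ D.dpow n) ≫ D.cap

end BrauerDatum

namespace BrauerDatum

variable {k : Type*} [CommRing k] [Invertible (2 : k)]
  {C : Type u} [Category.{v} C] [MonoidalCategory C]
  [Preadditive C] [Linear k C] [MonoidalPreadditive C] [MonoidalLinear k C]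

variable (D : BrauerDatum k C)

section helpers

lemma wl_neg (Z : C) {Y W : C} (f : Y ⟶ W) : Z ◁ (-f) = -(Z ◁ f) := by
  have h : Z ◁ (-f) + Z ◁ f = 0 := by
    rw [← MonoidalPreadditive.whiskerLeft_add]; simp
  exact eq_neg_of_add_eq_zero_left h

lemma wr_neg (Z : C) {Y W : C} (f : Y ⟶ W) : (-f) ▷ Z = -(f ▷ Z) := by
  have h : (-f) ▷ Z + f ▷ Z = 0 := by
    rw [← MonoidalPreadditive.add_whiskerRight]; simp
  exact eq_neg_of_add_eq_zero_left h

lemma wl_sub (Z : C) {Y W : C} (f g : Y ⟶ W) : Z ◁ (f - g) = Z ◁ f - Z ◁ g := by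
  rw [sub_eq_add_neg, sub_eq_add_neg, MonoidalPreadditive.whiskerLeft_add, wl_neg]

end helpers

/-! ### dot powers -/

lemma dpow_zero : D.dpow 0 = 𝟙 D.X := rfl

lemma dpow_succ (n : ℕ) : D.dpow (n + 1) = D.dpow n ≫ D.dot := rfl

lemma dot_dpow (n : ℕ) : D.dot ≫ D.dpow n = D.dpow n ≫ D.dot := by
  induction n with
  | zero => simp [dpow_zero]
  | succ n ih => rw [dpow_succ, ← Category.assoc, ih]

lemma dpow_succ' (n : ℕ) : D.dpow (n + 1) = D.dot ≫ D.dpow n := by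
  rw [dpow_succ, dot_dpow]

lemma dpow_add (m n : ℕ) : D.dpow (m + n) = D.dpow m ≫ D.dpow n := by
  induction n with
  | zero => simp [dpow_zero]
  | succ n ih => rw [← Nat.add_assoc, dpow_succ, dpow_succ, ih, Category.assoc]

/-! ### assoc-friendly forms of the axioms -/

lemma zig_assoc {Z : C} (f : D.X ⟶ Z) :
    (ρ_ D.X).inv ≫ (D.X ◁ D.cup) ≫ (α_ D.X D.X D.X).inv ≫ (D.cap ▷ D.X) ≫
      (λ_ D.X).hom ≫ f = f := by
  calc (ρ_ D.X).inv ≫ (D.X ◁ D.cup) ≫ (α_ D.X D.X D.X).inv ≫ (D.cap ▷ D.X) ≫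
      (λ_ D.X).hom ≫ f
      = ((ρ_ D.X).inv ≫ (D.X ◁ D.cup) ≫ (α_ D.X D.X D.X).inv ≫ (D.cap ▷ D.X) ≫
        (λ_ D.X).hom) ≫ f := by simp only [Category.assoc]
    _ = f := by rw [D.zig, Category.id_comp]

lemma zag_assoc {Z : C} (f : D.X ⟶ Z) :
    (λ_ D.X).inv ≫ (D.cup ▷ D.X) ≫ (α_ D.X D.X D.X).hom ≫ (D.X ◁ D.cap) ≫
      (ρ_ D.X).hom ≫ f = f := by
  calc (λ_ D.X).inv ≫ (D.cup ▷ D.X) ≫ (α_ D.X D.X D.X).hom ≫ (D.X ◁ D.cap) ≫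
      (ρ_ D.X).hom ≫ f
      = ((λ_ D.X).inv ≫ (D.cup ▷ D.X) ≫ (α_ D.X D.X D.X).hom ≫ (D.X ◁ D.cap) ≫
        (ρ_ D.X).hom) ≫ f := by simp only [Category.assoc]
    _ = f := by rw [D.zag, Category.id_comp]

lemma zig1 : D.X ◁ D.cup ≫ (α_ D.X D.X D.X).inv ≫ D.cap ▷ D.X =
    (ρ_ D.X).hom ≫ (λ_ D.X).inv := by
  rw [← cancel_epi (ρ_ D.X).inv, ← cancel_mono (λ_ D.X).hom]
  simpa [Category.assoc] using D.zig

lemma zag1 : D.cup ▷ D.X ≫ (α_ D.X D.X D.X).hom ≫ D.X ◁ D.cap =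
    (λ_ D.X).hom ≫ (ρ_ D.X).inv := by
  rw [← cancel_epi (λ_ D.X).inv, ← cancel_mono (ρ_ D.X).hom]
  simpa [Category.assoc] using D.zag

lemma zig2 : D.X ◁ D.cup ⊗≫ D.cap ▷ D.X = (ρ_ D.X).hom ≫ (λ_ D.X).inv := by
  convert D.zig1 using 1
  simp [monoidalComp]

lemma zag2 : D.cup ▷ D.X ⊗≫ D.X ◁ D.cap = (λ_ D.X).hom ≫ (ρ_ D.X).inv := by
  convert D.zag1 using 1
  simp [monoidalComp]

lemma cross_cross_assoc {Z : C} (f : D.X ⊗ D.X ⟶ Z) :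
    D.cross ≫ D.cross ≫ f = f := by
  rw [← Category.assoc, D.cross_cross, Category.id_comp]

lemma cross_cap_assoc {Z : C} (f : 𝟙_ C ⟶ Z) :
    D.cross ≫ D.cap ≫ f = D.cap ≫ f := by
  rw [← Category.assoc, D.cross_cap]

lemma dot_cap' : (D.X ◁ D.dot) ≫ D.cap = -((D.dot ▷ D.X) ≫ D.cap) := by
  rw [D.dot_cap, neg_neg]

/-! ### snake lemmas -/

/-- transpose through the cap, first version -/
def phi (v : 𝟙_ C ⟶ D.X ⊗ D.X) : D.X ⟶ D.X :=
  (λ_ D.X).inv ≫ (v ▷ D.X) ≫ (α_ D.X D.X D.X).hom ≫ (D.X ◁ D.cap) ≫ (ρ_ D.X).hom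

/-- transpose through the cap, second version -/
def psi (w : 𝟙_ C ⟶ D.X ⊗ D.X) : D.X ⟶ D.X :=
  (ρ_ D.X).inv ≫ (D.X ◁ w) ≫ (α_ D.X D.X D.X).inv ≫ (D.cap ▷ D.X) ≫ (λ_ D.X).hom

lemma snake1 (v : 𝟙_ C ⟶ D.X ⊗ D.X) : D.cup ≫ ((D.phi v) ▷ D.X) = v := by
  calc D.cup ≫ ((D.phi v) ▷ D.X)
      = 𝟙 (𝟙_ C) ⊗≫ ((𝟙_ C ◁ D.cup) ≫ (v ▷ (D.X ⊗ D.X))) ⊗≫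
        (D.X ◁ D.cap ▷ D.X) ⊗≫ 𝟙 (D.X ⊗ D.X) := by
        dsimp [phi]; monoidal
    _ = 𝟙 (𝟙_ C) ⊗≫ ((v ▷ (𝟙_ C)) ≫ ((D.X ⊗ D.X) ◁ D.cup)) ⊗≫
        (D.X ◁ D.cap ▷ D.X) ⊗≫ 𝟙 (D.X ⊗ D.X) := by
        rw [whisker_exchange]
    _ = v ⊗≫ (D.X ◁ (D.X ◁ D.cup ⊗≫ D.cap ▷ D.X)) ⊗≫ 𝟙 (D.X ⊗ D.X) := by
        monoidal
    _ = v := by rw [D.zig2]; monoidal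

lemma snake2 (w : 𝟙_ C ⟶ D.X ⊗ D.X) : D.cup ≫ (D.X ◁ (D.psi w)) = w := by
  calc D.cup ≫ (D.X ◁ (D.psi w))
      = 𝟙 (𝟙_ C) ⊗≫ ((D.cup ▷ (𝟙_ C)) ≫ ((D.X ⊗ D.X) ◁ w)) ⊗≫
        (D.X ◁ D.cap ▷ D.X) ⊗≫ 𝟙 (D.X ⊗ D.X) := by
        dsimp [psi]; monoidal
    _ = 𝟙 (𝟙_ C) ⊗≫ ((𝟙_ C ◁ w) ≫ (D.cup ▷ (D.X ⊗ D.X))) ⊗≫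
        (D.X ◁ D.cap ▷ D.X) ⊗≫ 𝟙 (D.X ⊗ D.X) := by
        rw [← whisker_exchange]
    _ = w ⊗≫ ((D.cup ▷ D.X ⊗≫ D.X ◁ D.cap) ▷ D.X) ⊗≫ 𝟙 (D.X ⊗ D.X) := by
        monoidal
    _ = w := by rw [D.zag2]; monoidal

/-! ### dot slides through the cup -/

lemma phi_cup_dot : D.phi (D.cup ≫ (D.X ◁ D.dot)) = -D.dot := by
  dsimp [phi]
  rw [comp_whiskerRight, Category.assoc, associator_naturality_middle_assoc,
    ← MonoidalCategory.whiskerLeft_comp_assoc, D.dot_cap, wl_neg]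
  rw [MonoidalCategory.whiskerLeft_comp]
  simp only [Preadditive.comp_neg, Preadditive.neg_comp, Category.assoc]
  rw [← associator_naturality_right_assoc, ← whisker_exchange_assoc,
    ← leftUnitor_inv_naturality_assoc, D.zag, Category.comp_id]

lemma cup_dot : D.cup ≫ (D.X ◁ D.dot) = -(D.cup ≫ (D.dot ▷ D.X)) := by
  conv_lhs => rw [← D.snake1 (D.cup ≫ (D.X ◁ D.dot))]
  rw [phi_cup_dot, wr_neg, Preadditive.comp_neg]

lemma cup_dot' : D.cup ≫ (D.dot ▷ D.X) = -(D.cup ≫ (D.X ◁ D.dot)) := by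
  rw [cup_dot, neg_neg]

/-! ### traces -/

/-- closing a one-strand morphism into a bubble -/
def tr (h : D.X ⟶ D.X) : 𝟙_ C ⟶ 𝟙_ C := D.cup ≫ (D.X ◁ h) ≫ D.cap

lemma tr_dpow (n : ℕ) : D.tr (D.dpow n) = D.bub n := rfl

lemma tr_sub (h h' : D.X ⟶ D.X) : D.tr (h - h') = D.tr h - D.tr h' := by
  simp only [tr, wl_sub, Preadditive.sub_comp, Preadditive.comp_sub]

lemma tr_add (h h' : D.X ⟶ D.X) : D.tr (h + h') = D.tr h + D.tr h' := by
  simp only [tr, MonoidalPreadditive.whiskerLeft_add, Preadditive.add_comp,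
    Preadditive.comp_add]

lemma tr_rot (h : D.X ⟶ D.X) : D.tr (h ≫ D.dot) = D.tr (D.dot ≫ h) := by
  dsimp [tr]
  rw [MonoidalCategory.whiskerLeft_comp, MonoidalCategory.whiskerLeft_comp]
  simp only [Category.assoc]
  rw [D.dot_cap']
  simp only [Preadditive.comp_neg]
  rw [whisker_exchange_assoc, ← Category.assoc D.cup, D.cup_dot']
  simp only [Preadditive.neg_comp, Preadditive.comp_neg, neg_neg, Category.assoc]

lemma tr_rot_pow (j : ℕ) (h : D.X ⟶ D.X) :
    D.tr (h ≫ D.dpow j) = D.tr (D.dpow j ≫ h) := by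
  induction j generalizing h with
  | zero => simp [dpow_zero]
  | succ j ih =>
    conv_lhs => rw [dpow_succ', ← Category.assoc, ih, ← Category.assoc, tr_rot,
      ← Category.assoc]
    conv_rhs => rw [dpow_succ', Category.assoc, ← Category.assoc]

/-! ### the curl -/

/-- the curl -/
def curl : D.X ⟶ D.X := D.psi (D.cup ≫ D.cross)

/-- rotating the crossing around the cup -/
lemma cup_cross_rot : D.cup ≫ D.cross = D.cup ≫ (D.X ◁ D.curl) := by
  rw [curl, snake2]

/-- partial trace over the first strand -/
def th (f : D.X ⊗ D.X ⟶ D.X ⊗ D.X) : D.X ⟶ D.X :=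
  (λ_ D.X).inv ≫ (D.cup ▷ D.X) ≫ (α_ D.X D.X D.X).hom ≫ (D.X ◁ f) ≫
    (α_ D.X D.X D.X).inv ≫ (D.cap ▷ D.X) ≫ (λ_ D.X).hom

lemma th_sub (f g : D.X ⊗ D.X ⟶ D.X ⊗ D.X) : D.th (f - g) = D.th f - D.th g := by
  simp only [th, wl_sub, Preadditive.sub_comp, Preadditive.comp_sub]

lemma th_slide : D.th (D.cross ≫ (D.dot ▷ D.X)) = D.th ((D.dot ▷ D.X) ≫ D.cross) := by
  dsimp [th]
  rw [MonoidalCategory.whiskerLeft_comp, MonoidalCategory.whiskerLeft_comp]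
  simp only [Category.assoc]
  rw [associator_inv_naturality_middle_assoc, ← comp_whiskerRight_assoc, D.dot_cap',
    wr_neg, comp_whiskerRight]
  simp only [Preadditive.comp_neg, Preadditive.neg_comp, Category.assoc]
  rw [← associator_inv_naturality_left_assoc, whisker_exchange_assoc,
    ← associator_naturality_left_assoc, ← comp_whiskerRight_assoc, D.cup_dot',
    wr_neg, comp_whiskerRight]
  simp only [Preadditive.neg_comp, Category.assoc, neg_neg]
  rw [associator_naturality_middle_assoc]
  simp only [Preadditive.neg_comp, Preadditive.comp_neg, neg_neg]

lemma th_dot_left : D.th ((D.X ◁ D.dot) ≫ D.cross) = D.dot ≫ D.th D.cross := by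
  dsimp [th]
  rw [MonoidalCategory.whiskerLeft_comp]
  simp only [Category.assoc]
  rw [← associator_naturality_right_assoc, ← whisker_exchange_assoc,
    ← leftUnitor_inv_naturality_assoc]

lemma th_dot_right : D.th (D.cross ≫ (D.X ◁ D.dot)) = D.th D.cross ≫ D.dot := by
  dsimp [th]
  rw [MonoidalCategory.whiskerLeft_comp]
  simp only [Category.assoc]
  rw [associator_inv_naturality_right_assoc, whisker_exchange_assoc,
    leftUnitor_naturality]

lemma th_capcup : D.th (D.cap ≫ D.cup) = 𝟙 D.X := by
  dsimp [th]
  rw [MonoidalCategory.whiskerLeft_comp]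
  rw [show D.X ◁ D.cap ≫ D.X ◁ D.cup = D.X ◁ D.cap ≫ (ρ_ D.X).hom ≫ (ρ_ D.X).inv ≫
    D.X ◁ D.cup from by simp]
  simp only [Category.assoc]
  rw [zag_assoc]
  exact D.zig

lemma th_capcup_cross : D.th (D.cap ≫ D.cup ≫ D.cross) = D.curl := by
  dsimp [th, curl, psi]
  rw [MonoidalCategory.whiskerLeft_comp, MonoidalCategory.whiskerLeft_comp]
  rw [show D.X ◁ D.cap ≫ D.X ◁ D.cup ≫ D.X ◁ D.cross = D.X ◁ D.cap ≫ (ρ_ D.X).hom ≫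
    (ρ_ D.X).inv ≫ D.X ◁ D.cup ≫ D.X ◁ D.cross from by simp]
  simp only [Category.assoc]
  rw [zag_assoc]

/-- the conjugated dot-crossing relation -/
lemma dot_cross' :
    (D.dot ▷ D.X) ≫ D.cross - D.cross ≫ (D.X ◁ D.dot) =
      𝟙 (D.X ⊗ D.X) - D.cap ≫ D.cup ≫ D.cross := by
  have h : D.cross ≫ (D.cross ≫ (D.dot ▷ D.X) - (D.X ◁ D.dot) ≫ D.cross) ≫ D.cross =
      D.cross ≫ (𝟙 (D.X ⊗ D.X) - D.cap ≫ D.cup) ≫ D.cross := by rw [D.dot_cross]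
  simp only [Preadditive.comp_sub, Preadditive.sub_comp, Category.assoc,
    Category.id_comp, Category.comp_id] at h
  rw [cross_cross_assoc] at h
  rw [show D.cross ≫ D.X ◁ D.dot ≫ D.cross ≫ D.cross =
    D.cross ≫ D.X ◁ D.dot from by rw [D.cross_cross, Category.comp_id]] at h
  rw [D.cross_cross] at h
  rw [cross_cap_assoc] at h
  exact h

/-- the commutator of the curl gadget with the dot -/
lemma curl_comm :
    D.th D.cross ≫ D.dot - D.dot ≫ D.th D.cross = D.curl - 𝟙 D.X := by
  have q1 : D.th ((D.dot ▷ D.X) ≫ D.cross) - D.dot ≫ D.th D.cross =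
      D.th (𝟙 (D.X ⊗ D.X)) - 𝟙 D.X := by
    have := congrArg D.th D.dot_cross
    rwa [th_sub, th_sub, th_slide, th_dot_left, th_capcup] at this
  have q3 : D.th ((D.dot ▷ D.X) ≫ D.cross) - D.th D.cross ≫ D.dot =
      D.th (𝟙 (D.X ⊗ D.X)) - D.curl := by
    have := congrArg D.th D.dot_cross'
    rwa [th_sub, th_sub, th_dot_right, th_capcup_cross] at this
  calc D.th D.cross ≫ D.dot - D.dot ≫ D.th D.cross
      = (D.th ((D.dot ▷ D.X) ≫ D.cross) - D.dot ≫ D.th D.cross) -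
        (D.th ((D.dot ▷ D.X) ≫ D.cross) - D.th D.cross ≫ D.dot) := by abel
    _ = (D.th (𝟙 (D.X ⊗ D.X)) - 𝟙 D.X) - (D.th (𝟙 (D.X ⊗ D.X)) - D.curl) := by
        rw [q1, q3]
    _ = D.curl - 𝟙 D.X := by abel

lemma tr_dpow_curl (j : ℕ) : D.tr (D.dpow j ≫ D.curl) = D.bub j := by
  have h : D.dpow j ≫ D.curl - D.dpow j =
      D.dpow j ≫ (D.th D.cross ≫ D.dot) - D.dpow j ≫ (D.dot ≫ D.th D.cross) := by
    rw [← Preadditive.comp_sub, D.curl_comm, Preadditive.comp_sub, Category.comp_id]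
  have h2 := congrArg D.tr h
  rw [tr_sub, tr_sub] at h2
  have h3 : D.tr (D.dpow j ≫ D.th D.cross ≫ D.dot) =
      D.tr (D.dpow j ≫ D.dot ≫ D.th D.cross) := by
    conv_lhs => rw [← Category.assoc, tr_rot, ← Category.assoc, dot_dpow,
      Category.assoc]
  rw [h3, sub_self, sub_eq_zero] at h2
  rw [h2, tr_dpow]

/-! ### the crossing bubbles -/

def gg (p q : ℕ) : 𝟙_ C ⟶ 𝟙_ C :=
  D.cup ≫ (D.X ◁ D.dpow q) ≫ D.cross ≫ (D.X ◁ D.dpow p) ≫ D.cap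

lemma gg_zero_right (q : ℕ) : D.gg 0 q = D.bub q := by
  dsimp [gg, bub]
  rw [dpow_zero, MonoidalCategory.whiskerLeft_id, Category.id_comp, D.cross_cap]

lemma gg_zero_left (p : ℕ) : D.gg p 0 = D.bub p := by
  dsimp [gg]
  rw [dpow_zero, MonoidalCategory.whiskerLeft_id, Category.id_comp, ← Category.assoc,
    D.cup_cross_rot, Category.assoc, ← MonoidalCategory.whiskerLeft_comp_assoc]
  have : D.cup ≫ (D.X ◁ (D.curl ≫ D.dpow p)) ≫ D.cap = D.tr (D.curl ≫ D.dpow p) := rfl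
  rw [this, tr_rot_pow, tr_dpow_curl]

lemma diamond (p q : ℕ) :
    D.gg (p + 1) q + D.gg p (q + 1) = D.bub q ≫ D.bub p - D.bub (p + q) := by
  have h : D.cup ≫ (D.X ◁ D.dpow q) ≫
      (D.cross ≫ (D.dot ▷ D.X) - (D.X ◁ D.dot) ≫ D.cross) ≫ (D.X ◁ D.dpow p) ≫ D.cap =
      D.cup ≫ (D.X ◁ D.dpow q) ≫
      (𝟙 (D.X ⊗ D.X) - D.cap ≫ D.cup) ≫ (D.X ◁ D.dpow p) ≫ D.cap := by
    rw [D.dot_cross]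
  simp only [Preadditive.sub_comp, Preadditive.comp_sub, Category.assoc,
    Category.id_comp] at h
  rw [← whisker_exchange_assoc] at h
  rw [D.dot_cap] at h
  simp only [Preadditive.comp_neg, Preadditive.neg_comp] at h
  rw [← MonoidalCategory.whiskerLeft_comp_assoc (D.X) (D.dpow p) (D.dot)] at h
  rw [← MonoidalCategory.whiskerLeft_comp_assoc (D.X) (D.dpow q) (D.dot)] at h
  rw [← dpow_succ, ← dpow_succ] at h
  rw [← MonoidalCategory.whiskerLeft_comp_assoc (D.X) (D.dpow q) (D.dpow p)] at h
  rw [← dpow_add, Nat.add_comm q p] at h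
  have e4 : D.cup ≫ D.X ◁ D.dpow q ≫ D.cap ≫ D.cup ≫ D.X ◁ D.dpow p ≫ D.cap =
      D.bub q ≫ D.bub p := by
    simp only [bub, Category.assoc]
  rw [e4] at h
  have h' : -(D.gg (p + 1) q) - D.gg p (q + 1) =
      D.bub (p + q) - D.bub q ≫ D.bub p := h
  calc D.gg (p + 1) q + D.gg p (q + 1)
      = -(-(D.gg (p + 1) q) - D.gg p (q + 1)) := by abel
    _ = -(D.bub (p + q) - D.bub q ≫ D.bub p) := by rw [h']
    _ = D.bub q ≫ D.bub p - D.bub (p + q) := by abel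

end BrauerDatum

/-- The odd dotted bubbles are determined by the even ones:
`ω_{2r+1} = ½(−ω_{2r} + Σ_{n=0}^{2r} (−1)^n ω_n ω_{2r−n})`. -/
theorem stmt_7 {k : Type*} [CommRing k] [Invertible (2 : k)]
    {C : Type u} [Category.{v} C] [MonoidalCategory C]
    [Preadditive C] [Linear k C] [MonoidalPreadditive C] [MonoidalLinear k C]
    (D : BrauerDatum k C) (r : ℕ) :
    D.bub (2 * r + 1) =
      (⅟(2 : k)) • (-(D.bub (2 * r)) +
        ∑ n ∈ Finset.range (2 * r + 1), ((-1 : k) ^ n) • (D.bub n ≫ D.bub (2 * r - n))) := by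
  have key : ∀ b ∈ Finset.range (2 * r + 1),
      ((-1 : k) ^ b) • D.gg b (2 * r + 1 - b) -
        ((-1 : k) ^ (b + 1)) • D.gg (b + 1) (2 * r + 1 - (b + 1)) =
      ((-1 : k) ^ b) • (D.bub (2 * r - b) ≫ D.bub b) - ((-1 : k) ^ b) • D.bub (2 * r) := by
    intro b hb
    have hb' : b < 2 * r + 1 := Finset.mem_range.mp hb
    have hq : 2 * r + 1 - b = (2 * r - b) + 1 := by omega
    have hq2 : 2 * r + 1 - (b + 1) = 2 * r - b := by omega
    have hd := D.diamond b (2 * r - b)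
    rw [show b + (2 * r - b) = 2 * r from by omega] at hd
    rw [hq, hq2, pow_succ, mul_neg_one, neg_smul, sub_neg_eq_add, ← smul_add, add_comm,
      hd, smul_sub]
  have tele := Finset.sum_range_sub'
    (fun b => ((-1 : k) ^ b) • D.gg b (2 * r + 1 - b)) (2 * r + 1)
  rw [Finset.sum_congr rfl key] at tele
  rw [Finset.sum_sub_distrib] at tele
  have hsum2 : ∑ b ∈ Finset.range (2 * r + 1), ((-1 : k) ^ b) • D.bub (2 * r) =
      D.bub (2 * r) := by
    rw [← Finset.sum_smul, neg_one_geom_sum,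
      if_neg (by exact (Nat.not_even_iff_odd.mpr ⟨r, by ring⟩)), one_smul]
  have hsum1 : ∑ b ∈ Finset.range (2 * r + 1), ((-1 : k) ^ b) • (D.bub (2 * r - b) ≫ D.bub b) =
      ∑ n ∈ Finset.range (2 * r + 1), ((-1 : k) ^ n) • (D.bub n ≫ D.bub (2 * r - n)) := by
    rw [← Finset.sum_range_reflect
      (fun n => ((-1 : k) ^ n) • (D.bub n ≫ D.bub (2 * r - n))) (2 * r + 1)]
    apply Finset.sum_congr rfl
    intro j hj
    have hj' : j < 2 * r + 1 := Finset.mem_range.mp hj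
    have h1 : 2 * r + 1 - 1 - j = 2 * r - j := by omega
    have h2 : 2 * r - (2 * r - j) = j := by omega
    rw [h1, h2]
    congr 1
    have e1 : ((-1 : k)) ^ (2 * r - j) * ((-1 : k)) ^ j = 1 := by
      rw [← pow_add, show 2 * r - j + j = 2 * r from by omega, pow_mul]; norm_num
    have e2 : ((-1 : k)) ^ j * ((-1 : k)) ^ j = 1 := by
      rw [← pow_add, ← two_mul, pow_mul]; norm_num
    calc ((-1 : k)) ^ j = (((-1 : k)) ^ (2 * r - j) * ((-1 : k)) ^ j) * ((-1 : k)) ^ j := by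
          rw [e1, one_mul]
      _ = ((-1 : k)) ^ (2 * r - j) * (((-1 : k)) ^ j * ((-1 : k)) ^ j) := by ring
      _ = ((-1 : k)) ^ (2 * r - j) := by rw [e2, mul_one]
  rw [hsum1, hsum2] at tele
  have f0 : ((-1 : k) ^ (0 : ℕ)) • D.gg 0 (2 * r + 1 - 0) = D.bub (2 * r + 1) := by
    rw [pow_zero, one_smul, Nat.sub_zero, D.gg_zero_right]
  have fs : ((-1 : k) ^ (2 * r + 1)) • D.gg (2 * r + 1) (2 * r + 1 - (2 * r + 1)) =
      -(D.bub (2 * r + 1)) := by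
    rw [Nat.sub_self, D.gg_zero_left, Odd.neg_one_pow ⟨r, by ring⟩, neg_one_smul]
  rw [f0, fs, sub_neg_eq_add] at tele
  have h2s : (2 : k) • D.bub (2 * r + 1) =
      (∑ n ∈ Finset.range (2 * r + 1), ((-1 : k) ^ n) • (D.bub n ≫ D.bub (2 * r - n))) -
        D.bub (2 * r) := by
    rw [two_smul]; exact tele.symm
  calc D.bub (2 * r + 1) = (⅟(2 : k)) • ((2 : k) • D.bub (2 * r + 1)) :=
        (invOf_smul_smul (2 : k) _).symm
    _ = (⅟(2 : k)) • (-(D.bub (2 * r)) +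
        ∑ n ∈ Finset.range (2 * r + 1), ((-1 : k) ^ n) • (D.bub n ≫ D.bub (2 * r - n))) := by
        rw [h2s, sub_eq_neg_add]
end

section
/- Given a Brauer datum (X, c, e, τ, δ) in a k-linear monoidal category C, the bubble generating series B_r(v) := 1 + (1 − v/2)⁻¹·Σ_{n≥0} ω_n·v^{n+1} and B_l(v) := −1 + (1 + v/2)⁻¹·Σ_{n≥0} (−1)^n·ω_n·v^{n+1} in the formal power series ring End(1)⟦v⟧ satisfy the infinite grassmannian relation B_l(v)·B_r(v) = −1. -/
open CategoryTheory CategoryTheory.MonoidalCategory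

universe v u

namespace BrauerDatum

variable {k : Type*} [CommRing k] [Invertible (2 : k)]
  {C : Type u} [Category.{v} C] [MonoidalCategory C]
  [Preadditive C] [Linear k C] [MonoidalPreadditive C] [MonoidalLinear k C]

variable (D : BrauerDatum k C)

/-- bend a cap-shaped morphism into an endomorphism of `X` -/
def mw (g : D.X ⊗ D.X ⟶ 𝟙_ C) : D.X ⟶ D.X :=
  (ρ_ D.X).inv ≫ (D.X ◁ D.cup) ≫ (α_ D.X D.X D.X).inv ≫ (g ▷ D.X) ≫ (λ_ D.X).hom

lemma mw_cap : D.mw D.cap = 𝟙 D.X := D.zig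

/-- rotate an endomorphism of `X ⊗ X` by one strand -/
def rot (h : D.X ⊗ D.X ⟶ D.X ⊗ D.X) : D.X ⊗ D.X ⟶ D.X ⊗ D.X :=
  (ρ_ (D.X ⊗ D.X)).inv ≫ ((D.X ⊗ D.X) ◁ D.cup) ≫ (α_ D.X D.X (D.X ⊗ D.X)).hom ≫
    (D.X ◁ (α_ D.X D.X D.X).inv) ≫ (D.X ◁ (h ▷ D.X)) ≫ (D.X ◁ (α_ D.X D.X D.X).hom) ≫
    (α_ D.X D.X (D.X ⊗ D.X)).inv ≫ (D.cap ▷ (D.X ⊗ D.X)) ≫ (λ_ (D.X ⊗ D.X)).hom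

/-- partial trace on the first strand -/
def tr1 (h : D.X ⊗ D.X ⟶ D.X ⊗ D.X) : D.X ⟶ D.X :=
  (λ_ D.X).inv ≫ (D.cup ▷ D.X) ≫ (α_ D.X D.X D.X).hom ≫ (D.X ◁ h) ≫
    (α_ D.X D.X D.X).inv ≫ (D.cap ▷ D.X) ≫ (λ_ D.X).hom

end BrauerDatum
namespace BrauerDatum
variable {k : Type*} [CommRing k] [Invertible (2 : k)]
  {C : Type u} [Category.{v} C] [MonoidalCategory C]
  [Preadditive C] [Linear k C] [MonoidalPreadditive C] [MonoidalLinear k C]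
variable (D : BrauerDatum k C)

lemma rot_cross : D.rot D.cross = D.cross := by
  calc D.rot D.cross
      = (ρ_ (D.X ⊗ D.X)).inv ≫ ((D.X ⊗ D.X) ◁ D.cup) ≫ (α_ (D.X ⊗ D.X) D.X D.X).inv ≫
        (((α_ D.X D.X D.X).hom ≫ (D.X ◁ D.cross) ≫ (α_ D.X D.X D.X).inv ≫
          (D.cap ▷ D.X) ≫ (λ_ D.X).hom) ▷ D.X) := by
        unfold rot; monoidal
    _ = (ρ_ (D.X ⊗ D.X)).inv ≫ ((D.X ⊗ D.X) ◁ D.cup) ≫ (α_ (D.X ⊗ D.X) D.X D.X).inv ≫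
        (((D.cross ▷ D.X) ≫ (α_ D.X D.X D.X).hom ≫ (D.X ◁ D.cap) ≫
          (ρ_ D.X).hom) ▷ D.X) := by rw [← D.cap_slide]
    _ = (ρ_ (D.X ⊗ D.X)).inv ≫ ((D.X ⊗ D.X) ◁ D.cup) ≫ (D.cross ▷ (D.X ⊗ D.X)) ≫
        (α_ (D.X ⊗ D.X) D.X D.X).inv ≫
        (((α_ D.X D.X D.X).hom ≫ (D.X ◁ D.cap) ≫ (ρ_ D.X).hom) ▷ D.X) := by
        simp only [comp_whiskerRight, Category.assoc]
        rw [← associator_inv_naturality_left_assoc]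
    _ = D.cross ≫ (ρ_ (D.X ⊗ D.X)).inv ≫ ((D.X ⊗ D.X) ◁ D.cup) ≫
        (α_ (D.X ⊗ D.X) D.X D.X).inv ≫
        (((α_ D.X D.X D.X).hom ≫ (D.X ◁ D.cap) ≫ (ρ_ D.X).hom) ▷ D.X) := by
        rw [whisker_exchange_assoc, ← rightUnitor_inv_naturality_assoc]
    _ = D.cross ≫ (D.X ◁ D.mw D.cap) := by
        unfold mw; congr 1; monoidal
    _ = D.cross := by rw [D.mw_cap]; simp
end BrauerDatum
namespace BrauerDatum
variable {k : Type*} [CommRing k] [Invertible (2 : k)]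
  {C : Type u} [Category.{v} C] [MonoidalCategory C]
  [Preadditive C] [Linear k C] [MonoidalPreadditive C] [MonoidalLinear k C]
variable (D : BrauerDatum k C)

lemma unit_exch {A B : C} (f : 𝟙_ C ⟶ A) (g : 𝟙_ C ⟶ B) :
    f ≫ (ρ_ A).inv ≫ (A ◁ g) = g ≫ (λ_ B).inv ≫ (f ▷ B) := by
  rw [rightUnitor_inv_naturality_assoc, ← whisker_exchange, ← unitors_inv_equal,
    leftUnitor_inv_naturality_assoc]

lemma cup_rot (h : D.X ⊗ D.X ⟶ D.X ⊗ D.X) :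
    D.cup ≫ D.rot h = D.cup ≫ (D.tr1 h ▷ D.X) := by
  calc D.cup ≫ D.rot h
      = (D.cup ≫ (ρ_ (D.X ⊗ D.X)).inv ≫ ((D.X ⊗ D.X) ◁ D.cup)) ≫
        (α_ D.X D.X (D.X ⊗ D.X)).hom ≫
        (D.X ◁ (α_ D.X D.X D.X).inv) ≫ (D.X ◁ (h ▷ D.X)) ≫ (D.X ◁ (α_ D.X D.X D.X).hom) ≫
        (α_ D.X D.X (D.X ⊗ D.X)).inv ≫ (D.cap ▷ (D.X ⊗ D.X)) ≫ (λ_ (D.X ⊗ D.X)).hom := by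
        unfold rot; simp
    _ = (D.cup ≫ (λ_ (D.X ⊗ D.X)).inv ≫ (D.cup ▷ (D.X ⊗ D.X))) ≫
        (α_ D.X D.X (D.X ⊗ D.X)).hom ≫
        (D.X ◁ (α_ D.X D.X D.X).inv) ≫ (D.X ◁ (h ▷ D.X)) ≫ (D.X ◁ (α_ D.X D.X D.X).hom) ≫
        (α_ D.X D.X (D.X ⊗ D.X)).inv ≫ (D.cap ▷ (D.X ⊗ D.X)) ≫ (λ_ (D.X ⊗ D.X)).hom := by
        rw [unit_exch]
    _ = D.cup ≫ (D.tr1 h ▷ D.X) := by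
        unfold tr1; simp only [Category.assoc]; congr 1; monoidal
end BrauerDatum
namespace BrauerDatum
variable {k : Type*} [CommRing k] [Invertible (2 : k)]
  {C : Type u} [Category.{v} C] [MonoidalCategory C]
  [Preadditive C] [Linear k C] [MonoidalPreadditive C] [MonoidalLinear k C]
variable (D : BrauerDatum k C)

lemma tr1_rot (h : D.X ⊗ D.X ⟶ D.X ⊗ D.X) : D.tr1 (D.rot h) = D.mw (h ≫ D.cap) := by
  calc D.tr1 (D.rot h)
      = (λ_ D.X).inv ≫ (D.cup ▷ D.X) ≫
        ((D.X ⊗ D.X) ◁ ((ρ_ D.X).inv ≫ (D.X ◁ D.cup) ≫ (α_ D.X D.X D.X).inv ≫ (h ▷ D.X))) ≫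
        ((α_ D.X D.X ((D.X ⊗ D.X) ⊗ D.X)).hom ≫ (D.X ◁ (D.X ◁ (α_ D.X D.X D.X).hom)) ≫
          (D.X ◁ (α_ D.X D.X (D.X ⊗ D.X)).inv) ≫ (D.X ◁ (D.cap ▷ (D.X ⊗ D.X))) ≫
          (D.X ◁ (λ_ (D.X ⊗ D.X)).hom) ≫ (α_ D.X D.X D.X).inv ≫ (D.cap ▷ D.X) ≫ (λ_ D.X).hom) := by
        unfold tr1 rot; monoidal
    _ = ((ρ_ D.X).inv ≫ (D.X ◁ D.cup) ≫ (α_ D.X D.X D.X).inv ≫ (h ▷ D.X)) ≫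
        (λ_ ((D.X ⊗ D.X) ⊗ D.X)).inv ≫ (D.cup ▷ ((D.X ⊗ D.X) ⊗ D.X)) ≫
        ((α_ D.X D.X ((D.X ⊗ D.X) ⊗ D.X)).hom ≫ (D.X ◁ (D.X ◁ (α_ D.X D.X D.X).hom)) ≫
          (D.X ◁ (α_ D.X D.X (D.X ⊗ D.X)).inv) ≫ (D.X ◁ (D.cap ▷ (D.X ⊗ D.X))) ≫
          (D.X ◁ (λ_ (D.X ⊗ D.X)).hom) ≫ (α_ D.X D.X D.X).inv ≫ (D.cap ▷ D.X) ≫ (λ_ D.X).hom) := by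
        rw [← whisker_exchange_assoc, leftUnitor_inv_naturality_assoc]
    _ = ((ρ_ D.X).inv ≫ (D.X ◁ D.cup) ≫ (α_ D.X D.X D.X).inv ≫ (h ▷ D.X)) ≫
        ((α_ D.X D.X D.X).hom ≫
          (((λ_ D.X).inv ≫ (D.cup ▷ D.X) ≫ (α_ D.X D.X D.X).hom ≫ (D.X ◁ D.cap) ≫ (ρ_ D.X).hom)
            ▷ (D.X ⊗ D.X)) ≫
          (α_ D.X D.X D.X).inv ≫ (D.cap ▷ D.X) ≫ (λ_ D.X).hom) := by
        congr 1; monoidal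
    _ = D.mw (h ≫ D.cap) := by
        rw [D.zag]; unfold mw; simp
end BrauerDatum
namespace BrauerDatum
variable {k : Type*} [CommRing k] [Invertible (2 : k)]
  {C : Type u} [Category.{v} C] [MonoidalCategory C]
  [Preadditive C] [Linear k C] [MonoidalPreadditive C] [MonoidalLinear k C]
variable (D : BrauerDatum k C)

lemma cup_cross : D.cup ≫ D.cross = D.cup := by
  calc D.cup ≫ D.cross = D.cup ≫ D.rot (D.rot D.cross) := by rw [D.rot_cross, D.rot_cross]
    _ = D.cup ≫ (D.tr1 (D.rot D.cross) ▷ D.X) := D.cup_rot _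
    _ = D.cup ≫ (D.mw (D.cross ≫ D.cap) ▷ D.X) := by rw [D.tr1_rot]
    _ = D.cup := by rw [D.cross_cap, D.mw_cap]; simp

lemma dpow_whiskerRight_succ (n : ℕ) :
    D.dpow (n + 1) ▷ D.X = (D.dpow n ▷ D.X) ≫ (D.dot ▷ D.X) := by
  rw [← comp_whiskerRight]; rfl

lemma dot_cap_pow (j : ℕ) : ∀ i : ℕ,
    (D.dpow j ▷ D.X) ≫ (D.X ◁ D.dpow i) ≫ D.cap =
      ((-1 : ℤ) ^ j) • ((D.X ◁ D.dpow (j + i)) ≫ D.cap) := by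
  induction j with
  | zero => intro i; show (𝟙 D.X ▷ D.X) ≫ _ = _; simp
  | succ n ih =>
    intro i
    rw [D.dpow_whiskerRight_succ, Category.assoc, ← whisker_exchange_assoc, D.dot_cap]
    have h1 : (D.X ◁ D.dpow i) ≫ (-((D.X ◁ D.dot) ≫ D.cap)) = -((D.X ◁ D.dpow (i+1)) ≫ D.cap) := by
      rw [Preadditive.comp_neg, ← Category.assoc, ← MonoidalCategory.whiskerLeft_comp]; rfl
    rw [h1, Preadditive.comp_neg, ih (i+1)]
    have h2 : n + (i + 1) = n + 1 + i := by omega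
    rw [h2, pow_succ]
    simp [neg_smul, mul_smul]

lemma bub_closure (i j : ℕ) :
    D.cup ≫ (D.X ◁ D.dpow i) ≫ (D.dpow j ▷ D.X) ≫ D.cap = ((-1 : ℤ) ^ j) • D.bub (i + j) := by
  rw [whisker_exchange_assoc, D.dot_cap_pow j i, Linear.comp_smul]
  rw [Nat.add_comm j i]
  rfl

lemma bub_closure' (j : ℕ) :
    D.cup ≫ (D.dpow j ▷ D.X) ≫ D.cap = ((-1 : ℤ) ^ j) • D.bub j := by
  have := D.bub_closure 0 j
  rw [(show D.dpow 0 = 𝟙 D.X from rfl)] at this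
  simpa using this

lemma slide (n : ℕ) :
    D.cross ≫ (D.dpow n ▷ D.X) = (D.X ◁ D.dpow n) ≫ D.cross +
      ∑ i ∈ Finset.range n, (D.X ◁ D.dpow i) ≫
        (𝟙 (D.X ⊗ D.X) - D.cap ≫ D.cup) ≫ (D.dpow (n - 1 - i) ▷ D.X) := by
  induction n with
  | zero => show D.cross ≫ (𝟙 D.X ▷ D.X) = (D.X ◁ 𝟙 D.X) ≫ D.cross + _; simp
  | succ n ih =>
    rw [D.dpow_whiskerRight_succ, ← Category.assoc, ih, Preadditive.add_comp,
      Preadditive.sum_comp]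
    have hc : D.cross ≫ (D.dot ▷ D.X) = (𝟙 (D.X ⊗ D.X) - D.cap ≫ D.cup) + (D.X ◁ D.dot) ≫ D.cross :=
      eq_add_of_sub_eq D.dot_cross
    have h1 : ((D.X ◁ D.dpow n) ≫ D.cross) ≫ (D.dot ▷ D.X)
        = (D.X ◁ D.dpow (n+1)) ≫ D.cross +
          (D.X ◁ D.dpow n) ≫ (𝟙 (D.X ⊗ D.X) - D.cap ≫ D.cup) ≫ (D.dpow (n + 1 - 1 - n) ▷ D.X) := by
      rw [Category.assoc, hc, Preadditive.comp_add]
      have : D.X ◁ D.dpow n ≫ (D.X ◁ D.dot) ≫ D.cross = (D.X ◁ D.dpow (n+1)) ≫ D.cross := by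
        rw [← Category.assoc, ← MonoidalCategory.whiskerLeft_comp]; rfl
      rw [this]
      have h2 : n + 1 - 1 - n = 0 := by omega
      rw [h2, (show D.dpow 0 = 𝟙 D.X from rfl)]
      simp [add_comm]
    have h3 : ∀ i ∈ Finset.range n,
        ((D.X ◁ D.dpow i) ≫ (𝟙 (D.X ⊗ D.X) - D.cap ≫ D.cup) ≫ (D.dpow (n - 1 - i) ▷ D.X))
          ≫ (D.dot ▷ D.X)
        = (D.X ◁ D.dpow i) ≫ (𝟙 (D.X ⊗ D.X) - D.cap ≫ D.cup) ≫ (D.dpow (n + 1 - 1 - i) ▷ D.X) := by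
      intro i hi
      have hin : i < n := Finset.mem_range.mp hi
      have h4 : n + 1 - 1 - i = (n - 1 - i) + 1 := by omega
      rw [h4, D.dpow_whiskerRight_succ]
      simp [Category.assoc]
    rw [Finset.sum_congr rfl h3, h1, Finset.sum_range_succ]
    abel

lemma key (n : ℕ) : ((-1 : ℤ) ^ n) • D.bub n =
    D.bub n + ∑ i ∈ Finset.range n,
      (((-1 : ℤ) ^ (n - 1 - i)) • D.bub (n - 1) -
        ((-1 : ℤ) ^ (n - 1 - i)) • (D.bub i ≫ D.bub (n - 1 - i))) := by
  have h := congrArg (fun f => D.cup ≫ f ≫ D.cap) (D.slide n)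
  simp only [Preadditive.comp_add, Preadditive.add_comp, Preadditive.comp_sum,
    Preadditive.sum_comp, Category.assoc] at h
  rw [← Category.assoc D.cup D.cross, D.cup_cross, D.bub_closure'] at h
  have h5 : D.cup ≫ (D.X ◁ D.dpow n) ≫ D.cross ≫ D.cap = D.bub n := by
    rw [D.cross_cap]; rfl
  rw [h5] at h
  have h6 : ∀ i ∈ Finset.range n,
      D.cup ≫ (D.X ◁ D.dpow i) ≫ (𝟙 (D.X ⊗ D.X) - D.cap ≫ D.cup) ≫ (D.dpow (n-1-i) ▷ D.X) ≫ D.cap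
      = ((-1 : ℤ) ^ (n - 1 - i)) • D.bub (n - 1) -
        ((-1 : ℤ) ^ (n - 1 - i)) • (D.bub i ≫ D.bub (n - 1 - i)) := by
    intro i hi
    have hin : i < n := Finset.mem_range.mp hi
    rw [Preadditive.sub_comp, Preadditive.comp_sub, Preadditive.comp_sub, Category.id_comp]
    have e1 : D.cup ≫ (D.X ◁ D.dpow i) ≫ (D.dpow (n-1-i) ▷ D.X) ≫ D.cap
        = ((-1 : ℤ) ^ (n-1-i)) • D.bub (n - 1) := by
      rw [D.bub_closure]
      congr 2
      omega
    have e2 : D.cup ≫ (D.X ◁ D.dpow i) ≫ (D.cap ≫ D.cup) ≫ (D.dpow (n-1-i) ▷ D.X) ≫ D.cap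
        = ((-1 : ℤ) ^ (n-1-i)) • (D.bub i ≫ D.bub (n - 1 - i)) := by
      have : D.cup ≫ (D.X ◁ D.dpow i) ≫ (D.cap ≫ D.cup) ≫ (D.dpow (n-1-i) ▷ D.X) ≫ D.cap
          = D.bub i ≫ (D.cup ≫ (D.dpow (n-1-i) ▷ D.X) ≫ D.cap) := by
        simp [bub, Category.assoc]
      rw [this, D.bub_closure', Linear.comp_smul]
    rw [e1, e2]
  rw [Finset.sum_congr rfl h6] at h
  exact h
end BrauerDatum



namespace BrauerDatum

variable {k : Type*} [CommRing k] [Invertible (2 : k)]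
  {C : Type u} [Category.{v} C] [MonoidalCategory C]
  [Preadditive C] [Linear k C] [MonoidalPreadditive C] [MonoidalLinear k C]

/-- The right bubble generating series `B_r(v) = 1 + (1 − v/2)⁻¹ Σ_{n≥0} ω_n v^{n+1}`,
using the explicit expansion `(1 − v/2)⁻¹ = Σ_n (½)^n v^n`. -/
noncomputable def Br (D : BrauerDatum k C) : PowerSeries (End (𝟙_ C)) :=
  1 + (PowerSeries.mk (fun n => ((⅟(2 : k)) ^ n) • (1 : End (𝟙_ C))) :
        PowerSeries (End (𝟙_ C))) *
      (PowerSeries.X *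
        (PowerSeries.mk (fun n => (D.bub n : End (𝟙_ C))) : PowerSeries (End (𝟙_ C))))

/-- The left bubble generating series `B_l(v) = −1 + (1 + v/2)⁻¹ Σ_{n≥0} (−1)^n ω_n v^{n+1}`,
using the explicit expansion `(1 + v/2)⁻¹ = Σ_n (−½)^n v^n`. -/
noncomputable def Bl (D : BrauerDatum k C) : PowerSeries (End (𝟙_ C)) :=
  -1 + (PowerSeries.mk (fun n => ((-⅟(2 : k)) ^ n) • (1 : End (𝟙_ C))) :
        PowerSeries (End (𝟙_ C))) *
      (PowerSeries.X *
        (PowerSeries.mk (fun n => ((-1 : k) ^ n) • (D.bub n : End (𝟙_ C))) :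
          PowerSeries (End (𝟙_ C))))

end BrauerDatum


section Helpers
open CategoryTheory CategoryTheory.MonoidalCategory

theorem end_comm {C : Type*} [Category C] [MonoidalCategory C] (f g : 𝟙_ C ⟶ 𝟙_ C) :
    f ≫ g = g ≫ f := by
  have h : ∀ a b : 𝟙_ C ⟶ 𝟙_ C,
      (λ_ (𝟙_ C)).inv ≫ 𝟙_ C ◁ a ≫ b ▷ 𝟙_ C ≫ (λ_ (𝟙_ C)).hom = a ≫ b := by
    intro a b
    rw [unitors_equal, rightUnitor_naturality, ← unitors_equal,
      leftUnitor_naturality_assoc, Iso.inv_hom_id_assoc]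
  rw [← h f g, ← h g f]
  slice_lhs 2 3 => rw [whisker_exchange]
  simp [unitors_equal, unitors_inv_equal]

section PS
open PowerSeries Finset

theorem geom_aux {R : Type*} [CommRing R] (t : R) :
    (1 - C t * X) * (PowerSeries.mk fun n => t ^ n) = 1 := by
  ext n
  rw [sub_mul, one_mul, map_sub]
  cases n with
  | zero => simp [coeff_mk]
  | succ m =>
    rw [mul_assoc, coeff_C_mul, coeff_succ_X_mul, coeff_mk, coeff_mk, coeff_one, pow_succ]
    ring_nf
    simp

theorem geom_aux' {R : Type*} [CommRing R] (t : R) :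
    (1 + C t * X) * (PowerSeries.mk fun n => (-t) ^ n) = 1 := by
  have := geom_aux (R := R) (-t)
  rw [map_neg] at this
  convert this using 2
  ring

theorem ps_grass {R : Type*} [CommRing R] (t : R) (w : ℕ → R)
    (hw : ∀ n : ℕ, (-1 : R) ^ (n + 1) * w (n + 1) - t * ((-1 : R) ^ n * w n) +
        ∑ p ∈ Finset.HasAntidiagonal.antidiagonal n, ((-1 : R) ^ p.1 * w p.1) * w p.2
        = w (n + 1) + t * w n) :
    (-1 + (PowerSeries.mk fun n => (-t) ^ n) *
        (PowerSeries.X * PowerSeries.mk fun n => (-1 : R) ^ n * w n)) *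
      (1 + (PowerSeries.mk fun n => t ^ n) * (PowerSeries.X * PowerSeries.mk fun n => w n))
      = -1 := by
  set G : PowerSeries R := PowerSeries.mk fun n => t ^ n with hGdef
  set H : PowerSeries R := PowerSeries.mk fun n => (-t) ^ n with hHdef
  set W : PowerSeries R := PowerSeries.mk fun n => w n with hWdef
  set V : PowerSeries R := PowerSeries.mk fun n => (-1 : R) ^ n * w n with hVdef
  have hG : (1 - C t * X) * G = 1 := geom_aux t
  have hH : (1 + C t * X) * H = 1 := geom_aux' t
  have hE : (1 - C t * X) * V + X * (V * W) = (1 + C t * X) * W := by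
    ext n
    rw [map_add, sub_mul, add_mul, one_mul, one_mul, map_sub, map_add]
    cases n with
    | zero =>
      simp [mul_assoc, coeff_C_mul, coeff_zero_X_mul, hVdef, hWdef, coeff_mk]
    | succ m =>
      rw [mul_assoc, mul_assoc, coeff_C_mul, coeff_C_mul, coeff_succ_X_mul, coeff_succ_X_mul,
        coeff_succ_X_mul, coeff_mul, hVdef, hWdef]
      simp only [coeff_mk]
      have := hw m
      rw [← this]
  linear_combination (H * G * PowerSeries.X) * hE - (H * PowerSeries.X * V) * hG +
    (G * PowerSeries.X * W) * hH

end PS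

namespace BrauerDatum
variable {k : Type*} [CommRing k] [Invertible (2 : k)]
  {C : Type u} [Category.{v} C] [MonoidalCategory C]
  [Preadditive C] [Linear k C] [MonoidalPreadditive C] [MonoidalLinear k C]
variable (D : BrauerDatum k C)

/-- the bubbles, packaged as elements of the endomorphism ring of the unit -/
def bubE (D : BrauerDatum k C) : ℕ → End (𝟙_ C) := D.bub

lemma convz (j : ℕ) (x : End (𝟙_ C)) :
    ((-1 : ℤ) ^ j) • x = (-1 : End (𝟙_ C)) ^ j * x := by
  rcases Nat.even_or_odd j with h | h
  · rw [h.neg_one_pow, h.neg_one_pow, one_smul, one_mul]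
  · rw [h.neg_one_pow, h.neg_one_pow, neg_smul, one_smul, neg_one_mul]

lemma invOf_two_add : (⅟(2:k)) + (⅟(2:k)) = 1 := by
  rw [← two_mul, mul_invOf_self]

lemma keyE (n : ℕ) :
    (-1 : End (𝟙_ C)) ^ n * D.bubE n = D.bubE n + ∑ i ∈ Finset.range n,
      ((-1 : End (𝟙_ C)) ^ (n - 1 - i) * D.bubE (n - 1) -
        (-1 : End (𝟙_ C)) ^ (n - 1 - i) * (D.bubE (n - 1 - i) * D.bubE i)) := by
  have hk := D.key n
  rw [show D.bub = D.bubE from rfl] at hk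
  refine ((convz n _).symm.trans (hk.trans ?_))
  refine congrArg _ (Finset.sum_congr rfl fun i _ => ?_)
  rw [convz, convz]
  rfl

lemma key' (n : ℕ) :
    (-1 : End (𝟙_ C)) ^ (n + 1) * D.bubE (n + 1) -
      ((⅟(2:k)) • (1 : End (𝟙_ C))) * ((-1 : End (𝟙_ C)) ^ n * D.bubE n) +
      ∑ p ∈ Finset.HasAntidiagonal.antidiagonal n,
        ((-1 : End (𝟙_ C)) ^ p.1 * D.bubE p.1) * D.bubE p.2
    = D.bubE (n + 1) + ((⅟(2:k)) • (1 : End (𝟙_ C))) * D.bubE n := by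
  letI : CommRing (End (𝟙_ C)) :=
    { (inferInstance : Ring (End (𝟙_ C))) with mul_comm := fun f g => end_comm g f }
  have hsm : ∀ x : End (𝟙_ C),
      ((⅟(2:k)) • (1 : End (𝟙_ C))) * x = (⅟(2:k)) • x := by
    intro x; rw [smul_mul_assoc, one_mul]
  have hk := D.keyE (n + 1)
  simp only [Nat.add_sub_cancel, Finset.sum_sub_distrib] at hk
  have hgeom : ∑ i ∈ Finset.range (n + 1), (-1 : End (𝟙_ C)) ^ (n - i)
      = if Even (n + 1) then 0 else 1 := by
    have hr := Finset.sum_range_reflect (fun j => (-1 : End (𝟙_ C)) ^ j) (n + 1)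
    simp only [Nat.add_sub_cancel] at hr
    rw [hr, neg_one_geom_sum]
  have hS1 : ∑ i ∈ Finset.range (n + 1), (-1 : End (𝟙_ C)) ^ (n - i) * D.bubE n
      = ((⅟(2:k)) • (1 : End (𝟙_ C))) * D.bubE n +
        ((⅟(2:k)) • (1 : End (𝟙_ C))) * ((-1 : End (𝟙_ C)) ^ n * D.bubE n) := by
    rw [← Finset.sum_mul, hgeom, hsm, hsm]
    rcases Nat.even_or_odd n with he | ho
    · rw [he.neg_one_pow, if_neg (by simp [Nat.even_add_one, he]), one_mul,
        ← add_smul, invOf_two_add, one_smul]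
    · rw [ho.neg_one_pow, if_pos (by simp [Nat.even_add_one, Nat.not_even_iff_odd, ho]),
        zero_mul]
      simp
  have hS2 : ∑ i ∈ Finset.range (n + 1),
        (-1 : End (𝟙_ C)) ^ (n - i) * (D.bubE (n - i) * D.bubE i)
      = ∑ p ∈ Finset.HasAntidiagonal.antidiagonal n,
        ((-1 : End (𝟙_ C)) ^ p.1 * D.bubE p.1) * D.bubE p.2 := by
    rw [Finset.Nat.sum_antidiagonal_eq_sum_range_succ_mk]
    have hr := Finset.sum_range_reflect
      (fun j => ((-1 : End (𝟙_ C)) ^ j * D.bubE j) * D.bubE (n - j)) (n + 1)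
    simp only [Nat.add_sub_cancel] at hr
    rw [← hr]
    refine Finset.sum_congr rfl fun i hi => ?_
    have hin : i ≤ n := by
      have := Finset.mem_range.mp hi; omega
    rw [Nat.sub_sub_self hin]
    ring
  rw [hS1, hS2] at hk
  linear_combination hk

end BrauerDatum
end Helpers

/-- The infinite grassmannian relation in the affine Brauer category:
`B_l(v) · B_r(v) = −1`. -/
theorem stmt_8 {k : Type*} [CommRing k] [Invertible (2 : k)]
    {C : Type u} [Category.{v} C] [MonoidalCategory C]
    [Preadditive C] [Linear k C] [MonoidalPreadditive C] [MonoidalLinear k C]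
    (D : BrauerDatum k C) :
    D.Bl * D.Br = -1 := by
  letI : CommRing (End (𝟙_ C)) :=
    { (inferInstance : Ring (End (𝟙_ C))) with mul_comm := fun f g => end_comm g f }
  have f1 : (fun n => ((⅟(2 : k)) ^ n) • (1 : End (𝟙_ C)))
      = fun n => ((⅟(2:k)) • (1 : End (𝟙_ C))) ^ n := by
    funext n; rw [smul_pow, one_pow]
  have f2 : (fun n => ((-⅟(2 : k)) ^ n) • (1 : End (𝟙_ C)))
      = fun n => (-((⅟(2:k)) • (1 : End (𝟙_ C)))) ^ n := by
    funext n; rw [← neg_smul, smul_pow, one_pow]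
  have f3 : (fun n => ((-1 : k) ^ n) • (D.bub n : End (𝟙_ C)))
      = fun n => (-1 : End (𝟙_ C)) ^ n * D.bubE n := by
    funext n
    rcases Nat.even_or_odd n with he | ho
    · rw [he.neg_one_pow, he.neg_one_pow, one_smul, one_mul]; rfl
    · rw [ho.neg_one_pow, ho.neg_one_pow, neg_smul, one_smul, neg_one_mul]; rfl
  have hBl : D.Bl = -1 + (PowerSeries.mk fun n => (-((⅟(2:k)) • (1 : End (𝟙_ C)))) ^ n) *
      (PowerSeries.X * PowerSeries.mk fun n =>
        (-1 : End (𝟙_ C)) ^ n * D.bubE n) := by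
    simp only [BrauerDatum.Bl, f2, f3]
  have hBr : D.Br = 1 + (PowerSeries.mk fun n => (((⅟(2:k)) • (1 : End (𝟙_ C)))) ^ n) *
      (PowerSeries.X * PowerSeries.mk fun n => D.bubE n) := by
    simp only [BrauerDatum.Br, f1]
    rfl
  rw [hBl, hBr]
  exact ps_grass ((⅟(2:k)) • (1 : End (𝟙_ C))) D.bubE (fun n => D.key' n)
end
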